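/- arXiv:2501.17308 — 2 statements merged into one kernel-verified Lean document; each statement's English description precedes it below -/
import Mathlib

section
/- Let A₀ : ℝ³ → ℝ and A : ℝ³ → ℝ² be twice continuously differentiable with compact support, Φ : ℝ³ → ℝ continuous, θ ∈ ℝ² a unit vector, φ : ℝ² → ℝ and h : ℝ → ℝ twice continuously differentiable, and λ ∈ ℝ. Define A⁺(x,y,t) = exp(−∫₀ᵗ (A₀(x+sθ,y) − i θ·A(x+sθ,y)) ds) and f(x,y,t) = φ(x+tθ) h(y) A⁺(x,y,t). Then f satisfies ∂ₜf − θ·∇ₓf + (A₀ − iθ·A) f = 0 pointwise, and consequently L_{𝒜,Φ}( e^{iλ(x·θ+t)} f ) = e^{iλ(x·θ+t)} · L_{𝒜,Φ} f at every point of ℝ³ × ℝ. -/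
/-!
Along the ray `s ↦ X + s w` the amplitude `exp (-∫₀ᵗ g (X + s w) ds)` is differentiated in `t` by
the fundamental theorem of calculus and in `X` under the integral sign, the partial derivative
being bounded on compact sets. Its two derivatives along `w` differ by exactly `-g X`, because
`∫₀ᵗ ∂_w g (X + s w) ds = g (X + t w) - g X`, while the profile `P (X + t w)` is transported
unchanged: this is the transport equation. Conjugating `L_{𝒜,Φ}` by the plane wave
`e^{iλ(x·θ+t)}` produces, as `|θ| = 1`, only the first-order term `2iλ` times the left-hand side of
the transport equation, which therefore vanishes.
-/

noncomputable section

open MeasureTheory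

/-- Partial derivative in time of a function `u(x, y, t)`. -/
def Dt (u : (ℝ × ℝ) → ℝ → ℝ → ℂ) : (ℝ × ℝ) → ℝ → ℝ → ℂ :=
  fun x y t => deriv (fun τ => u x y τ) t

/-- Partial derivative in the first spatial `x`-coordinate. -/
def Dx1 (u : (ℝ × ℝ) → ℝ → ℝ → ℂ) : (ℝ × ℝ) → ℝ → ℝ → ℂ :=
  fun x y t => deriv (fun a => u (a, x.2) y t) x.1

/-- Partial derivative in the second spatial `x`-coordinate. -/
def Dx2 (u : (ℝ × ℝ) → ℝ → ℝ → ℂ) : (ℝ × ℝ) → ℝ → ℝ → ℂ :=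
  fun x y t => deriv (fun b => u (x.1, b) y t) x.2

/-- Partial derivative in the `y`-coordinate. -/
def Dy (u : (ℝ × ℝ) → ℝ → ℝ → ℂ) : (ℝ × ℝ) → ℝ → ℝ → ℂ :=
  fun x y t => deriv (fun s => u x s t) y

/-- Spatial divergence (in the `x` variables) of a planar vector field on `ℝ³`. -/
def divX (A : (ℝ × ℝ) × ℝ → ℝ × ℝ) : (ℝ × ℝ) × ℝ → ℝ :=
  fun X => deriv (fun a => (A ((a, X.1.2), X.2)).1) X.1.1
         + deriv (fun b => (A ((X.1.1, b), X.2)).2) X.1.2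

/-- The relativistic wave operator
`L_{𝒜,Φ} u = (∂ₜ + A₀)² u − (∇ₓ + iA)² u − ∂ᵧ² u + Φ u`, where
`(∂ₜ + A₀)² u = ∂ₜ²u + 2A₀∂ₜu + A₀²u` and
`(∇ₓ + iA)² u = Δₓu + 2iA·∇ₓu + i(divₓA)u − |A|²u`. -/
def relWave (A₀ : (ℝ × ℝ) × ℝ → ℝ) (A : (ℝ × ℝ) × ℝ → ℝ × ℝ)
    (Φ : (ℝ × ℝ) × ℝ → ℝ) (u : (ℝ × ℝ) → ℝ → ℝ → ℂ) :
    (ℝ × ℝ) → ℝ → ℝ → ℂ :=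
  fun x y t =>
    Dt (Dt u) x y t + 2 * (A₀ (x, y) : ℂ) * Dt u x y t
      + ((A₀ (x, y) : ℂ)) ^ 2 * u x y t
    - (Dx1 (Dx1 u) x y t + Dx2 (Dx2 u) x y t
        + 2 * Complex.I * (((A (x, y)).1 : ℂ) * Dx1 u x y t
            + ((A (x, y)).2 : ℂ) * Dx2 u x y t)
        + Complex.I * (divX A (x, y) : ℂ) * u x y t
        - (((A (x, y)).1 : ℂ) ^ 2 + ((A (x, y)).2 : ℂ) ^ 2) * u x y t)
    - Dy (Dy u) x y t
    + (Φ (x, y) : ℂ) * u x y t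

open Function

section ParametricIntegral

variable {H E : Type*} [NormedAddCommGroup H] [NormedSpace ℝ H] [ProperSpace H]
  [NormedAddCommGroup E] [NormedSpace ℝ E]

theorem hasFDerivAt_parametric_intervalIntegral_of_continuous {F : H → ℝ → E}
    {F' : H → ℝ → H →L[ℝ] E}
    (hF : Continuous (uncurry F)) (hF' : Continuous (uncurry F'))
    (hFF' : ∀ x s, HasFDerivAt (F · s) (F' x s) x) (α β : ℝ) (x₀ : H) :
    HasFDerivAt (fun x => ∫ s in α..β, F x s) (∫ s in α..β, F' x₀ s) x₀ := by
  obtain ⟨C, hC⟩ := ((isCompact_closedBall x₀ 1).prod isCompact_uIcc).exists_bound_of_continuousOn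
    (hF'.continuousOn (s := Metric.closedBall x₀ 1 ×ˢ Set.uIcc α β))
  have hF_slice : ∀ x, Continuous (F x) := fun x => hF.comp (Continuous.prodMk_right x)
  refine intervalIntegral.hasFDerivAt_integral_of_dominated_of_fderiv_le (bound := fun _ => C)
    (Metric.closedBall_mem_nhds x₀ one_pos)
    (Filter.Eventually.of_forall fun x => (hF_slice x).aestronglyMeasurable)
    ((hF_slice x₀).intervalIntegrable α β)
    (hF'.comp (Continuous.prodMk_right x₀)).aestronglyMeasurable
    (Filter.Eventually.of_forall fun s hs x hx => hC (x, s) ⟨hx, Set.uIoc_subset_uIcc hs⟩)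
    intervalIntegrable_const
    (Filter.Eventually.of_forall fun s _ x _ => hFF' x s)

theorem contDiff_parametric_intervalIntegral_of_contDiff {n : ℕ} {G : ℝ × ℝ → E}
    (hG : ContDiff ℝ n G) (α β : ℝ) : ContDiff ℝ n (fun a => ∫ s in α..β, G (a, s)) := by
  induction n generalizing G with
  | zero =>
    exact contDiff_zero.2 (intervalIntegral.continuous_parametric_intervalIntegral_of_continuous'
      (show Continuous (uncurry fun a s => G (a, s)) from contDiff_zero.1 hG) α β)
  | succ n ih =>
    have hG1 : ContDiff ℝ 1 G := hG.of_le (by norm_cast; omega)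
    have hderiv : ∀ a, HasDerivAt (fun a => ∫ s in α..β, G (a, s))
        (∫ s in α..β, fderiv ℝ G (a, s) (1, 0)) a := by
      intro a
      have hGd : ∀ p, HasFDerivAt G (fderiv ℝ G p) p :=
        fun p => (hG1.differentiable one_ne_zero p).hasFDerivAt
      have hcont := hG1.continuous_fderiv one_ne_zero
      have := (hasFDerivAt_parametric_intervalIntegral_of_continuous (F := fun a s => G (a, s))
        (F' := fun a s => (fderiv ℝ G (a, s)).comp (ContinuousLinearMap.inl ℝ ℝ ℝ))
        hG1.continuous (by fun_prop)
        (fun a s => (hGd (a, s)).comp a (hasFDerivAt_prodMk_left a s)) α β a).hasDerivAt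
      rwa [ContinuousLinearMap.intervalIntegral_apply] at this
      exact (by fun_prop : Continuous _).intervalIntegrable α β
    rw [Nat.cast_succ, contDiff_succ_iff_deriv]
    refine ⟨fun a => (hderiv a).differentiableAt, by simp, ?_⟩
    rw [funext fun a => (hderiv a).deriv]
    exact ih ((hG.fderiv_right (m := n) (by norm_cast)).clm_apply contDiff_const)

theorem contDiff_primitive [CompleteSpace E] {n : ℕ} {g : ℝ → E} (hg : ContDiff ℝ n g) (α : ℝ) :
    ContDiff ℝ (n + 1) (fun τ => ∫ s in α..τ, g s) := by
  rw [contDiff_succ_iff_deriv]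
  refine ⟨fun τ => (hg.continuous.integral_hasStrictDerivAt α τ).hasDerivAt.differentiableAt,
    by simp, ?_⟩
  rwa [funext fun τ => (hg.continuous.integral_hasStrictDerivAt α τ).hasDerivAt.deriv]

end ParametricIntegral

section Transport

variable {E : Type*} [NormedAddCommGroup E] [NormedSpace ℝ E] {P g : E → ℂ}

/-- For `g = A₀ - iθ·A` and `w = (θ, 0)` this is the paper's `A⁺`. -/
def transportAmplitude (g : E → ℂ) (w X : E) (t : ℝ) : ℂ :=
  Complex.exp (-∫ s in (0:ℝ)..t, g (X + s • w))

def opticsAnsatz (P g : E → ℂ) (w X : E) (t : ℝ) : ℂ :=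
  P (X + t • w) * transportAmplitude g w X t

theorem hasDerivAt_transportAmplitude_time (hg : Continuous g) (w X : E) (t : ℝ) :
    HasDerivAt (transportAmplitude g w X)
      (transportAmplitude g w X t * -g (X + t • w)) t :=
  ((Continuous.integral_hasStrictDerivAt (by fun_prop) 0 t).hasDerivAt.neg).cexp

theorem hasFDerivAt_transportAmplitude_space [ProperSpace E] (hg : ContDiff ℝ 1 g)
    (w X : E) (t : ℝ) :
    HasFDerivAt (fun X => transportAmplitude g w X t)
      (transportAmplitude g w X t • -∫ s in (0:ℝ)..t, fderiv ℝ g (X + s • w)) X := by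
  have hcont := hg.continuous_fderiv one_ne_zero
  refine ((hasFDerivAt_parametric_intervalIntegral_of_continuous (F := fun X s => g (X + s • w))
    (F' := fun X s => fderiv ℝ g (X + s • w)) (by fun_prop) (by fun_prop) (fun X s => ?_)
    0 t X).neg).cexp
  exact (hg.differentiable one_ne_zero _).hasFDerivAt.comp X ((hasFDerivAt_id X).add_const _)

theorem intervalIntegral_fderiv_line_apply [CompleteSpace E] (hg : ContDiff ℝ 1 g)
    (w X : E) (t : ℝ) :
    (∫ s in (0:ℝ)..t, fderiv ℝ g (X + s • w)) w = g (X + t • w) - g X := by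
  have hcont := hg.continuous_fderiv one_ne_zero
  rw [ContinuousLinearMap.intervalIntegral_apply
    ((by fun_prop : Continuous _).intervalIntegrable 0 t)]
  have := intervalIntegral.integral_eq_sub_of_hasDerivAt (a := 0) (b := t)
    (f := fun s => g (X + s • w)) (f' := fun s => fderiv ℝ g (X + s • w) w)
    (fun s _ => ((hg.differentiable one_ne_zero _).hasFDerivAt).comp_hasDerivAt s
      (((hasDerivAt_id s).smul_const w).const_add X |>.congr_deriv (by simp)))
    ((by fun_prop : Continuous _).intervalIntegrable 0 t)
  simpa using this

theorem hasDerivAt_opticsAnsatz_time (hP : Differentiable ℝ P) (hg : Continuous g)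
    (w X : E) (t : ℝ) :
    HasDerivAt (opticsAnsatz P g w X)
      (fderiv ℝ P (X + t • w) w * transportAmplitude g w X t
        + P (X + t • w) * (transportAmplitude g w X t * -g (X + t • w))) t :=
  ((hP _).hasFDerivAt.comp_hasDerivAt t
    (((hasDerivAt_id t).smul_const w).const_add X |>.congr_deriv (by simp))).mul
    (hasDerivAt_transportAmplitude_time hg w X t)

theorem hasFDerivAt_opticsAnsatz_space [ProperSpace E] (hP : Differentiable ℝ P)
    (hg : ContDiff ℝ 1 g) (w X : E) (t : ℝ) :
    HasFDerivAt (fun X => opticsAnsatz P g w X t)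
      (P (X + t • w) • transportAmplitude g w X t • -(∫ s in (0:ℝ)..t, fderiv ℝ g (X + s • w))
        + transportAmplitude g w X t • fderiv ℝ P (X + t • w)) X :=
  ((hP _).hasFDerivAt.comp X ((hasFDerivAt_id X).add_const _)).mul
    (hasFDerivAt_transportAmplitude_space hg w X t)

theorem opticsAnsatz_transport [ProperSpace E] (hP : Differentiable ℝ P) (hg : ContDiff ℝ 1 g)
    (w X : E) (t : ℝ) :
    deriv (opticsAnsatz P g w X) t - fderiv ℝ (fun X => opticsAnsatz P g w X t) X w
      + g X * opticsAnsatz P g w X t = 0 := by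
  rw [(hasDerivAt_opticsAnsatz_time hP hg.continuous w X t).deriv,
    (hasFDerivAt_opticsAnsatz_space hP hg w X t).fderiv]
  simp only [add_apply, smul_apply, neg_apply, intervalIntegral_fderiv_line_apply hg,
    opticsAnsatz, smul_eq_mul]
  ring

theorem contDiff_opticsAnsatz_time {n : ℕ} (hP : ContDiff ℝ n P) (hg : ContDiff ℝ n g)
    (w X : E) : ContDiff ℝ n (opticsAnsatz P g w X) := by
  have hW := contDiff_primitive (n := n) (g := fun s => g (X + s • w)) (by fun_prop) 0
  unfold opticsAnsatz transportAmplitude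
  exact (hP.comp (by fun_prop)).mul (hW.of_le (by norm_cast; omega)).neg.cexp

theorem contDiff_opticsAnsatz_comp {n : ℕ} {γ : ℝ → E} (hγ : ContDiff ℝ n γ)
    (hP : ContDiff ℝ n P) (hg : ContDiff ℝ n g) (w : E) (t : ℝ) :
    ContDiff ℝ n (fun a => opticsAnsatz P g w (γ a) t) := by
  have hW := contDiff_parametric_intervalIntegral_of_contDiff (G := fun p => g (γ p.1 + p.2 • w))
    (hg.comp ((hγ.comp contDiff_fst).add (contDiff_snd.smul contDiff_const))) 0 t
  unfold opticsAnsatz transportAmplitude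
  exact (hP.comp (hγ.add contDiff_const)).mul hW.neg.cexp

end Transport

section PlaneWave

open Complex

theorem deriv_mul_of_hasDerivAt_eq_mul {e q : ℝ → ℂ} {c : ℂ} (he : ∀ r, HasDerivAt e (c * e r) r)
    {r : ℝ} (hq : DifferentiableAt ℝ q r) :
    deriv (fun r => e r * q r) r = e r * (c * q r + deriv q r) := by
  rw [((he r).fun_mul hq.hasDerivAt).deriv]
  ring

theorem deriv_deriv_mul_of_hasDerivAt_eq_mul {e q : ℝ → ℂ} {c : ℂ}
    (he : ∀ r, HasDerivAt e (c * e r) r) (hq : ContDiff ℝ 2 q) (r : ℝ) :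
    deriv (deriv (fun r => e r * q r)) r
      = e r * (c ^ 2 * q r + 2 * c * deriv q r + deriv (deriv q) r) := by
  have hq1 : Differentiable ℝ q := hq.differentiable two_ne_zero
  have hq2 : Differentiable ℝ (deriv q) :=
    (contDiff_succ_iff_deriv.1 (show ContDiff ℝ (1 + 1) q from hq)).2.2.differentiable
      one_ne_zero
  have hd : deriv (fun r => e r * q r) = fun r => e r * (c * q r + deriv q r) :=
    funext fun r => deriv_mul_of_hasDerivAt_eq_mul he (hq1 r)
  rw [hd, deriv_mul_of_hasDerivAt_eq_mul (q := fun r => c * q r + deriv q r) he (by fun_prop),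
    deriv_fun_add (by fun_prop) (hq2 r), deriv_const_mul c (hq1 r)]
  ring

theorem hasDerivAt_cexp_I_mul_ofReal {ψ : ℝ → ℝ} {k : ℝ} (lam : ℝ) {r : ℝ}
    (hψ : HasDerivAt ψ k r) :
    HasDerivAt (fun r => exp (I * lam * (ψ r : ℂ)))
      (I * lam * k * exp (I * lam * (ψ r : ℂ))) r := by
  convert (hψ.ofReal_comp.const_mul (I * lam)).cexp using 1
  ring

theorem relWave_planeWave_mul (A₀ : (ℝ × ℝ) × ℝ → ℝ) (A : (ℝ × ℝ) × ℝ → ℝ × ℝ)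
    (Φ : (ℝ × ℝ) × ℝ → ℝ) {θ : ℝ × ℝ} (hθ : θ.1 ^ 2 + θ.2 ^ 2 = 1) (lam : ℝ)
    {u : (ℝ × ℝ) → ℝ → ℝ → ℂ} {x : ℝ × ℝ} {y t : ℝ}
    (hut : ContDiff ℝ 2 fun τ => u x y τ) (hu₁ : ContDiff ℝ 2 fun a => u (a, x.2) y t)
    (hu₂ : ContDiff ℝ 2 fun b => u (x.1, b) y t) :
    relWave A₀ A Φ
        (fun x y t => exp (I * lam * ((x.1 * θ.1 + x.2 * θ.2 + t : ℝ) : ℂ)) * u x y t) x y t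
      = exp (I * lam * ((x.1 * θ.1 + x.2 * θ.2 + t : ℝ) : ℂ))
        * (relWave A₀ A Φ u x y t
          + 2 * I * lam * (Dt u x y t - (θ.1 * Dx1 u x y t + θ.2 * Dx2 u x y t)
            + ((A₀ (x, y) : ℂ) - I * ((θ.1 * (A (x, y)).1 + θ.2 * (A (x, y)).2 : ℝ) : ℂ))
              * u x y t)) := by
  have het : ∀ τ, HasDerivAt (fun τ => exp (I * lam * ((x.1 * θ.1 + x.2 * θ.2 + τ : ℝ) : ℂ)))
      (I * lam * 1 * exp (I * lam * ((x.1 * θ.1 + x.2 * θ.2 + τ : ℝ) : ℂ))) τ :=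
    fun τ => hasDerivAt_cexp_I_mul_ofReal lam ((hasDerivAt_id τ).const_add _)
  have he₁ : ∀ a, HasDerivAt (fun a => exp (I * lam * ((a * θ.1 + x.2 * θ.2 + t : ℝ) : ℂ)))
      (I * lam * θ.1 * exp (I * lam * ((a * θ.1 + x.2 * θ.2 + t : ℝ) : ℂ))) a :=
    fun a => hasDerivAt_cexp_I_mul_ofReal lam
      ((((hasDerivAt_id a).mul_const θ.1).add_const _).add_const _ |>.congr_deriv (by simp))
  have he₂ : ∀ b, HasDerivAt (fun b => exp (I * lam * ((x.1 * θ.1 + b * θ.2 + t : ℝ) : ℂ)))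
      (I * lam * θ.2 * exp (I * lam * ((x.1 * θ.1 + b * θ.2 + t : ℝ) : ℂ))) b :=
    fun b => hasDerivAt_cexp_I_mul_ofReal lam
      ((((hasDerivAt_id b).mul_const θ.2).const_add _).add_const _ |>.congr_deriv (by simp))
  have hθ' : (θ.1 : ℂ) ^ 2 + (θ.2 : ℂ) ^ 2 = 1 := by exact_mod_cast hθ
  simp only [relWave, Dt, Dx1, Dx2, Dy]
  rw [deriv_deriv_mul_of_hasDerivAt_eq_mul het hut,
    deriv_mul_of_hasDerivAt_eq_mul het (hut.differentiable two_ne_zero t),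
    deriv_deriv_mul_of_hasDerivAt_eq_mul he₁ hu₁,
    deriv_mul_of_hasDerivAt_eq_mul he₁ (hu₁.differentiable two_ne_zero x.1),
    deriv_deriv_mul_of_hasDerivAt_eq_mul he₂ hu₂,
    deriv_mul_of_hasDerivAt_eq_mul he₂ (hu₂.differentiable two_ne_zero x.2)]
  simp only [deriv_const_mul_field', Prod.mk.eta]
  push_cast
  linear_combination
    (-(exp (I * lam * (x.1 * θ.1 + x.2 * θ.2 + t)) * (I * lam) ^ 2 * u x y t)) * hθ'

end PlaneWave

theorem Dx1_eq_fderiv {F : (ℝ × ℝ) × ℝ → ℝ → ℂ} {x : ℝ × ℝ} {y t : ℝ}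
    (hF : DifferentiableAt ℝ (F · t) (x, y)) :
    Dx1 (fun x y t => F (x, y) t) x y t = fderiv ℝ (F · t) (x, y) ((1, 0), 0) := by
  have hline : HasDerivAt (fun a => ((a, x.2), y)) (((1 : ℝ), (0 : ℝ)), (0 : ℝ)) x.1 :=
    ((hasDerivAt_id' x.1).prodMk (hasDerivAt_const x.1 x.2)).prodMk (hasDerivAt_const x.1 y)
  exact (hF.hasFDerivAt.comp_hasDerivAt x.1 hline).deriv

theorem Dx2_eq_fderiv {F : (ℝ × ℝ) × ℝ → ℝ → ℂ} {x : ℝ × ℝ} {y t : ℝ}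
    (hF : DifferentiableAt ℝ (F · t) (x, y)) :
    Dx2 (fun x y t => F (x, y) t) x y t = fderiv ℝ (F · t) (x, y) ((0, 1), 0) := by
  have hline : HasDerivAt (fun b => ((x.1, b), y)) (((0 : ℝ), (1 : ℝ)), (0 : ℝ)) x.2 :=
    ((hasDerivAt_const x.2 x.1).prodMk (hasDerivAt_id' x.2)).prodMk (hasDerivAt_const x.2 y)
  exact (hF.hasFDerivAt.comp_hasDerivAt x.2 hline).deriv

theorem opticsAnsatz_transport_coords {P g : (ℝ × ℝ) × ℝ → ℂ} (hP : Differentiable ℝ P)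
    (hg : ContDiff ℝ 1 g) (θ : ℝ × ℝ) (x : ℝ × ℝ) (y t : ℝ) :
    Dt (fun x y t => opticsAnsatz P g ((θ.1, θ.2), 0) (x, y) t) x y t
      - ((θ.1 : ℂ) * Dx1 (fun x y t => opticsAnsatz P g ((θ.1, θ.2), 0) (x, y) t) x y t
        + (θ.2 : ℂ) * Dx2 (fun x y t => opticsAnsatz P g ((θ.1, θ.2), 0) (x, y) t) x y t)
      + g (x, y) * opticsAnsatz P g ((θ.1, θ.2), 0) (x, y) t = 0 := by
  set w : (ℝ × ℝ) × ℝ := ((θ.1, θ.2), 0)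
  have hd := (hasFDerivAt_opticsAnsatz_space hP hg w (x, y) t).differentiableAt
  have hw : w = θ.1 • ((1, 0), 0) + θ.2 • ((0, 1), 0) := by ext <;> simp [w]
  have key := opticsAnsatz_transport hP hg w (x, y) t
  rw [hw, map_add, map_smul, map_smul, Complex.real_smul, Complex.real_smul, ← hw] at key
  rwa [Dx1_eq_fderiv (F := opticsAnsatz P g w) hd, Dx2_eq_fderiv (F := opticsAnsatz P g w) hd]

theorem relWave_of_plane_wave_times_ansatz_general
    (A₀ : (ℝ × ℝ) × ℝ → ℝ) (A : (ℝ × ℝ) × ℝ → ℝ × ℝ) (Φ : (ℝ × ℝ) × ℝ → ℝ)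
    (hA₀ : ContDiff ℝ 2 A₀)
    (hA : ContDiff ℝ 2 A)
    (θ : ℝ × ℝ) (hθ : θ.1 ^ 2 + θ.2 ^ 2 = 1)
    (φ : ℝ × ℝ → ℝ) (h : ℝ → ℝ) (hφ : ContDiff ℝ 2 φ) (hh : ContDiff ℝ 2 h)
    (lam : ℝ)
    (Aplus : (ℝ × ℝ) → ℝ → ℝ → ℂ)
    (hAplus : ∀ (x : ℝ × ℝ) (y t : ℝ),
      Aplus x y t = Complex.exp (-(∫ s in (0:ℝ)..t,
        ((A₀ ((x.1 + s * θ.1, x.2 + s * θ.2), y) : ℂ)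
          - Complex.I * ((θ.1 * (A ((x.1 + s * θ.1, x.2 + s * θ.2), y)).1
              + θ.2 * (A ((x.1 + s * θ.1, x.2 + s * θ.2), y)).2 : ℝ) : ℂ)))))
    (f : (ℝ × ℝ) → ℝ → ℝ → ℂ)
    (hf : ∀ (x : ℝ × ℝ) (y t : ℝ),
      f x y t = ((φ (x.1 + t * θ.1, x.2 + t * θ.2) : ℝ) : ℂ) * ((h y : ℝ) : ℂ)
        * Aplus x y t) :
    (∀ (x : ℝ × ℝ) (y t : ℝ),
      Dt f x y t - ((θ.1 : ℂ) * Dx1 f x y t + (θ.2 : ℂ) * Dx2 f x y t)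
        + (((A₀ (x, y) : ℝ) : ℂ)
            - Complex.I * ((θ.1 * (A (x, y)).1 + θ.2 * (A (x, y)).2 : ℝ) : ℂ)) * f x y t
        = 0) ∧
    (∀ (x : ℝ × ℝ) (y t : ℝ),
      relWave A₀ A Φ
          (fun x y t =>
            Complex.exp (Complex.I * (lam : ℂ) * ((x.1 * θ.1 + x.2 * θ.2 + t : ℝ) : ℂ))
              * f x y t) x y t
        = Complex.exp (Complex.I * (lam : ℂ) * ((x.1 * θ.1 + x.2 * θ.2 + t : ℝ) : ℂ))
            * relWave A₀ A Φ f x y t) := by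
  set g : (ℝ × ℝ) × ℝ → ℂ :=
    fun X => (A₀ X : ℂ) - Complex.I * ((θ.1 * (A X).1 + θ.2 * (A X).2 : ℝ) : ℂ)
  set P : (ℝ × ℝ) × ℝ → ℂ := fun X => (φ X.1 : ℂ) * (h X.2 : ℂ)
  have hg : ContDiff ℝ 2 g := (Complex.ofRealCLM.contDiff.comp hA₀).sub
    (contDiff_const.mul (Complex.ofRealCLM.contDiff.comp
      ((contDiff_const.mul (contDiff_fst.comp hA)).add
        (contDiff_const.mul (contDiff_snd.comp hA)))))
  have hP : ContDiff ℝ 2 P := (Complex.ofRealCLM.contDiff.comp (hφ.comp contDiff_fst)).mul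
    (Complex.ofRealCLM.contDiff.comp (hh.comp contDiff_snd))
  obtain rfl : f = fun x y t => opticsAnsatz P g ((θ.1, θ.2), 0) (x, y) t := by
    have hline : ∀ (x : ℝ × ℝ) (y s : ℝ),
        ((x, y) : (ℝ × ℝ) × ℝ) + s • ((θ.1, θ.2), 0) = ((x.1 + s * θ.1, x.2 + s * θ.2), y) := by
      intro x y s
      ext <;> simp
    funext x y t
    simp only [hf, hAplus, opticsAnsatz, transportAmplitude, hline, P, g, mul_assoc]
  have transport := opticsAnsatz_transport_coords (hP.differentiable two_ne_zero)
    (hg.of_le one_le_two) θ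
  refine ⟨transport, fun x y t => ?_⟩
  rw [relWave_planeWave_mul A₀ A Φ hθ lam (contDiff_opticsAnsatz_time hP hg _ _)
    (contDiff_opticsAnsatz_comp (by fun_prop) hP hg _ t)
    (contDiff_opticsAnsatz_comp (by fun_prop) hP hg _ t), transport, mul_zero, add_zero]

/-- The geometric optics ansatz `f(x,y,t) = φ(x+tθ) h(y) A⁺(x,y,t)`
satisfies the transport equation `∂ₜf − θ·∇ₓf + (A₀ − iθ·A) f = 0`, and consequently
`L_{𝒜,Φ}(e^{iλ(x·θ+t)} f) = e^{iλ(x·θ+t)} L_{𝒜,Φ} f` at every point. -/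
theorem relWave_of_plane_wave_times_ansatz
    (A₀ : (ℝ × ℝ) × ℝ → ℝ) (A : (ℝ × ℝ) × ℝ → ℝ × ℝ) (Φ : (ℝ × ℝ) × ℝ → ℝ)
    (hA₀ : ContDiff ℝ 2 A₀) (hA₀c : HasCompactSupport A₀)
    (hA : ContDiff ℝ 2 A) (hAc : HasCompactSupport A)
    (hΦ : Continuous Φ)
    (θ : ℝ × ℝ) (hθ : θ.1 ^ 2 + θ.2 ^ 2 = 1)
    (φ : ℝ × ℝ → ℝ) (h : ℝ → ℝ) (hφ : ContDiff ℝ 2 φ) (hh : ContDiff ℝ 2 h)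
    (lam : ℝ)
    (Aplus : (ℝ × ℝ) → ℝ → ℝ → ℂ)
    (hAplus : ∀ (x : ℝ × ℝ) (y t : ℝ),
      Aplus x y t = Complex.exp (-(∫ s in (0:ℝ)..t,
        ((A₀ ((x.1 + s * θ.1, x.2 + s * θ.2), y) : ℂ)
          - Complex.I * ((θ.1 * (A ((x.1 + s * θ.1, x.2 + s * θ.2), y)).1
              + θ.2 * (A ((x.1 + s * θ.1, x.2 + s * θ.2), y)).2 : ℝ) : ℂ)))))
    (f : (ℝ × ℝ) → ℝ → ℝ → ℂ)
    (hf : ∀ (x : ℝ × ℝ) (y t : ℝ),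
      f x y t = ((φ (x.1 + t * θ.1, x.2 + t * θ.2) : ℝ) : ℂ) * ((h y : ℝ) : ℂ)
        * Aplus x y t) :
    (∀ (x : ℝ × ℝ) (y t : ℝ),
      Dt f x y t - ((θ.1 : ℂ) * Dx1 f x y t + (θ.2 : ℂ) * Dx2 f x y t)
        + (((A₀ (x, y) : ℝ) : ℂ)
            - Complex.I * ((θ.1 * (A (x, y)).1 + θ.2 * (A (x, y)).2 : ℝ) : ℂ)) * f x y t
        = 0) ∧
    (∀ (x : ℝ × ℝ) (y t : ℝ),
      relWave A₀ A Φ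
          (fun x y t =>
            Complex.exp (Complex.I * (lam : ℂ) * ((x.1 * θ.1 + x.2 * θ.2 + t : ℝ) : ℂ))
              * f x y t) x y t
        = Complex.exp (Complex.I * (lam : ℂ) * ((x.1 * θ.1 + x.2 * θ.2 + t : ℝ) : ℂ))
            * relWave A₀ A Φ f x y t) :=
  relWave_of_plane_wave_times_ansatz_general A₀ A Φ hA₀ hA θ hθ φ h hφ hh lam Aplus hAplus f hf
end
end

section
/- Let f : ℝ² → ℂ be integrable, let θ = (θ₁,θ₂) ∈ ℝ² be a unit vector with perpendicular θ^⊥ = (−θ₂,θ₁), and let ξ ∈ ℝ² satisfy θ·ξ = 0. Then the function s ↦ f(ρθ^⊥ − sθ) is integrable for almost every ρ ∈ ℝ, and ∫_{ℝ²} e^{−i x·ξ} f(x) dx = ∫_ℝ e^{−i ρ (θ^⊥·ξ)} ( ∫_ℝ f(ρθ^⊥ − sθ) ds ) dρ. -/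
/-!
Parametrise the plane by `(ρ, s) ↦ ρθ^⊥ − sθ`. For a unit vector `θ` this linear map has
determinant `1`, so it preserves Lebesgue measure, and Fubini's theorem in the new coordinates
turns the integral over the plane into an iterated integral over the lines in direction `θ`.
Since `θ · ξ = 0`, the phase `x · ξ` only depends on the line `ρ`, namely it equals `ρ (θ^⊥ · ξ)`,
so the character comes out of the inner integral.
-/

open MeasureTheory

namespace MeasureTheory.MeasurePreserving

variable {α β γ E : Type*} [MeasurableSpace α] [MeasurableSpace β] [MeasurableSpace γ]
  [NormedAddCommGroup E] {μ : Measure α} {ν : Measure β} [SFinite μ] [SFinite ν]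
  {m : Measure γ} {e : α × β → γ} {g : γ → E}

theorem ae_integrable_comp_prodMk (he : MeasurePreserving e (μ.prod ν) m)
    (he_emb : MeasurableEmbedding e) (hg : Integrable g m) :
    ∀ᵐ x ∂μ, Integrable (fun y => g (e (x, y))) ν :=
  ((he.integrable_comp_emb he_emb).2 hg).prod_right_ae

theorem integral_eq_integral_integral_comp [NormedSpace ℝ E]
    (he : MeasurePreserving e (μ.prod ν) m) (he_emb : MeasurableEmbedding e) (hg : Integrable g m) :
    ∫ z, g z ∂m = ∫ x, ∫ y, g (e (x, y)) ∂ν ∂μ := by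
  rw [← he.integral_comp he_emb]
  exact integral_prod (fun z => g (e z)) ((he.integrable_comp_emb he_emb).2 hg)

end MeasureTheory.MeasurePreserving

namespace LinearMap

variable {E : Type*} [NormedAddCommGroup E] [NormedSpace ℝ E] [MeasurableSpace E] [BorelSpace E]
  [FiniteDimensional ℝ E]

theorem measurableEmbedding_of_det_ne_zero {f : E →ₗ[ℝ] E} (hf : LinearMap.det f ≠ 0) :
    MeasurableEmbedding f :=
  (f.equivOfDetNeZero hf).toContinuousLinearEquiv.toHomeomorph.measurableEmbedding

theorem measurePreserving_of_abs_det_eq_one (μ : Measure E) [μ.IsAddHaarMeasure]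
    {f : E →ₗ[ℝ] E} (hf : |LinearMap.det f| = 1) : MeasurePreserving f μ μ where
  measurable := f.continuous_of_finiteDimensional.measurable
  map_eq := by
    have hf₀ : LinearMap.det f ≠ 0 := fun h => by simp [h] at hf
    rw [Measure.map_linearMap_addHaar_eq_smul_addHaar μ hf₀, abs_inv, hf]
    simp

end LinearMap

/-- The map `(ρ, s) ↦ ρθ^⊥ − sθ`, where `θ^⊥ = (−θ₂, θ₁)`. -/
noncomputable def lineParam (θ : ℝ × ℝ) : ℝ × ℝ →ₗ[ℝ] ℝ × ℝ :=
  Matrix.toLin (Module.Basis.finTwoProd ℝ) (Module.Basis.finTwoProd ℝ) !![-θ.2, -θ.1; θ.1, -θ.2]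

theorem lineParam_apply (θ p : ℝ × ℝ) :
    lineParam θ p = (p.1 * (-θ.2) - p.2 * θ.1, p.1 * θ.1 - p.2 * θ.2) := by
  rw [lineParam, Matrix.toLin_finTwoProd_apply]
  ext <;> dsimp only <;> ring

theorem det_lineParam (θ : ℝ × ℝ) : LinearMap.det (lineParam θ) = θ.1 ^ 2 + θ.2 ^ 2 := by
  rw [lineParam, LinearMap.det_toLin, Matrix.det_fin_two_of]
  ring

theorem lineParam_dot (θ ξ p : ℝ × ℝ) :
    (lineParam θ p).1 * ξ.1 + (lineParam θ p).2 * ξ.2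
      = p.1 * ((-θ.2) * ξ.1 + θ.1 * ξ.2) - p.2 * (θ.1 * ξ.1 + θ.2 * ξ.2) := by
  rw [lineParam_apply]
  ring

theorem MeasureTheory.Integrable.exp_neg_I_mul_mul {α : Type*} [MeasurableSpace α]
    {μ : Measure α} {f : α → ℂ} (hf : Integrable f μ) {φ : α → ℝ} (hφ : Measurable φ) :
    Integrable (fun x => Complex.exp (-Complex.I * (φ x : ℂ)) * f x) μ := by
  refine hf.bdd_mul (c := 1) (by fun_prop) (Filter.Eventually.of_forall fun x => ?_)
  simp [Complex.norm_exp]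

/-- For integrable `f : ℝ² → ℂ`, a unit vector `θ` with perpendicular
`θ^⊥ = (−θ₂, θ₁)` and `ξ ⊥ θ`, the function `s ↦ f(ρθ^⊥ − sθ)` is integrable for a.e.
`ρ ∈ ℝ` and
`∫_{ℝ²} e^{−i x·ξ} f(x) dx = ∫_ℝ e^{−iρ(θ^⊥·ξ)} (∫_ℝ f(ρθ^⊥ − sθ) ds) dρ`. -/
theorem fourier_transform_via_radon_transform
    (f : ℝ × ℝ → ℂ) (hf : MeasureTheory.Integrable f)
    (θ : ℝ × ℝ) (hθ : θ.1 ^ 2 + θ.2 ^ 2 = 1)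
    (ξ : ℝ × ℝ) (hξ : θ.1 * ξ.1 + θ.2 * ξ.2 = 0) :
    (∀ᵐ ρ ∂(volume : Measure ℝ),
      MeasureTheory.Integrable
        (fun s : ℝ => f (ρ * (-θ.2) - s * θ.1, ρ * θ.1 - s * θ.2))) ∧
    (∫ x : ℝ × ℝ, Complex.exp (-Complex.I * ((x.1 * ξ.1 + x.2 * ξ.2 : ℝ) : ℂ)) * f x
      = ∫ ρ : ℝ,
          Complex.exp (-Complex.I * ((ρ * ((-θ.2) * ξ.1 + θ.1 * ξ.2) : ℝ) : ℂ))
            * ∫ s : ℝ, f (ρ * (-θ.2) - s * θ.1, ρ * θ.1 - s * θ.2)) := by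
  have hdet : LinearMap.det (lineParam θ) ≠ 0 := by rw [det_lineParam, hθ]; exact one_ne_zero
  have hT : MeasurePreserving (lineParam θ) (volume.prod volume) volume :=
    LinearMap.measurePreserving_of_abs_det_eq_one volume (by rw [det_lineParam, hθ, abs_one])
  have hT_emb := LinearMap.measurableEmbedding_of_det_ne_zero hdet
  refine ⟨by simpa only [lineParam_apply] using hT.ae_integrable_comp_prodMk hT_emb hf, ?_⟩
  rw [hT.integral_eq_integral_integral_comp hT_emb (hf.exp_neg_I_mul_mul (by fun_prop))]
  congr 1 with ρ
  simp_rw [lineParam_dot, hξ, mul_zero, sub_zero, lineParam_apply]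
  exact integral_const_mul _ _
end
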